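/- The order ≤_HZX is an admissible order on IVIFNs: it is a total order, and for any two IVIFNs α, β, if μL_α ≤ μL_β, μR_α ≤ μR_β, νL_α ≥ νL_β, and νR_α ≥ νR_β, then α ≤_HZX β. -/

import Mathlib

structure IVIFN where
  muL : ℝ
  muR : ℝ
  nuL : ℝ
  nuR : ℝ
  muL_nonneg : 0 ≤ muL
  mu_le : muL ≤ muR
  muR_le_one : muR ≤ 1
  nuL_nonneg : 0 ≤ nuL
  nu_le : nuL ≤ nuR
  nuR_le_one : nuR ≤ 1
  sum_le_one : muR + nuR ≤ 1

noncomputable def Sf (a : IVIFN) : ℝ := (a.muL + a.muR) / 2 - (a.nuL + a.nuR) / 2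
noncomputable def Hf (a : IVIFN) : ℝ := (a.muL + a.muR) / 2 + (a.nuL + a.nuR) / 2
noncomputable def E2 (a : IVIFN) : ℝ := (a.muR - a.muL + a.nuR - a.nuL) / 2
noncomputable def E3 (a : IVIFN) : ℝ := a.muR - a.muL

def ltHZX (a b : IVIFN) : Prop :=
  Sf a < Sf b ∨ (Sf a = Sf b ∧ (Hf a < Hf b ∨ (Hf a = Hf b ∧
    (E2 a < E2 b ∨ (E2 a = E2 b ∧ E3 a < E3 b)))))

def leHZX (a b : IVIFN) : Prop := a = b ∨ ltHZX a b

/-! `≤_HZX` is the pullback of the lexicographic order on `ℝ⁴` along the score vector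
`(S, H, E₂, E₃)`. This vector determines the IVIFN, since `μL + μR = S + H`, `νL + νR = H - S`,
`μR - μL = E₃` and `νR - νL = 2 E₂ - E₃`; so `≤_HZX` inherits a linear order. Under containment
`S` can only grow, and it stays equal only if all four endpoints agree. -/

namespace IVIFN

noncomputable def scoreVector (a : IVIFN) : ℝ ×ₗ ℝ ×ₗ ℝ ×ₗ ℝ :=
  toLex (Sf a, toLex (Hf a, toLex (E2 a, E3 a)))

theorem ext_iff {a b : IVIFN} :
    a = b ↔ a.muL = b.muL ∧ a.muR = b.muR ∧ a.nuL = b.nuL ∧ a.nuR = b.nuR := by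
  cases a; cases b; simp

theorem scoreVector_injective : Function.Injective scoreVector := by
  intro a b h
  simp only [scoreVector, toLex_inj, Prod.mk.injEq, Sf, Hf, E2, E3] at h
  obtain ⟨hS, hH, hE2, hE3⟩ := h
  exact ext_iff.2 ⟨by linarith, by linarith, by linarith, by linarith⟩

theorem ltHZX_iff_scoreVector_lt {a b : IVIFN} : ltHZX a b ↔ scoreVector a < scoreVector b := by
  simp only [ltHZX, scoreVector, Prod.Lex.toLex_lt_toLex]

theorem leHZX_iff_scoreVector_le {a b : IVIFN} : leHZX a b ↔ scoreVector a ≤ scoreVector b := by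
  rw [leHZX, ltHZX_iff_scoreVector_lt, le_iff_eq_or_lt, scoreVector_injective.eq_iff]

section Containment

variable {a b : IVIFN} (hmuL : a.muL ≤ b.muL) (hmuR : a.muR ≤ b.muR) (hnuL : b.nuL ≤ a.nuL)
  (hnuR : b.nuR ≤ a.nuR)
include hmuL hmuR hnuL hnuR

theorem Sf_le_of_contained : Sf a ≤ Sf b := by
  unfold Sf; linarith

theorem eq_of_contained_of_Sf_eq (hS : Sf a = Sf b) : a = b := by
  unfold Sf at hS
  exact ext_iff.2 ⟨by linarith, by linarith, by linarith, by linarith⟩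

theorem leHZX_of_contained : leHZX a b := by
  rcases (Sf_le_of_contained hmuL hmuR hnuL hnuR).lt_or_eq with hlt | heq
  · exact Or.inr (Or.inl hlt)
  · exact Or.inl (eq_of_contained_of_Sf_eq hmuL hmuR hnuL hnuR heq)

end Containment

end IVIFN

theorem leHZX_admissible :
    (∀ a b : IVIFN, leHZX a b ∨ leHZX b a) ∧
    (∀ a : IVIFN, leHZX a a) ∧
    (∀ a b : IVIFN, leHZX a b → leHZX b a → a = b) ∧
    (∀ a b c : IVIFN, leHZX a b → leHZX b c → leHZX a c) ∧
    (∀ a b : IVIFN, a.muL ≤ b.muL → a.muR ≤ b.muR → a.nuL ≥ b.nuL → a.nuR ≥ b.nuR →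
      leHZX a b) := by
  refine ⟨?_, fun a => Or.inl rfl, ?_, ?_, fun a b => IVIFN.leHZX_of_contained⟩ <;>
    simp only [IVIFN.leHZX_iff_scoreVector_le]
  · exact fun a b => le_total _ _
  · exact fun a b hab hba => IVIFN.scoreVector_injective (le_antisymm hab hba)
  · exact fun a b c => le_trans
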